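/- Let A be a commutative ring, D ⊆ A a subset (the 'diagonal'), and suppose I', I'' are ideals of A with I' ∩ D = {0} and I'' ∩ D = {0}. It does not follow that (I' + I'') ∩ D = {0}: there exists a commutative ring A, a subring-image diagonal D, and ideals I', I'' each meeting D trivially whose sum is all of A. Concretely, in A = (C^∞(ℝ))^ℕ with D the set of constant sequences, the principal ideals generated by v' = (1 + sin(ν·))_ν and v'' = (1 + cos(ν·))_ν each meet D trivially, but their sum contains the unit and hence equals A. -/

import Mathlib

/-- The subring of smooth functions `C^∞(ℝ)` inside `ℝ → ℝ`. -/
def SmoothR : Subring (ℝ → ℝ) where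
  carrier := {f | ContDiff ℝ (⊤ : ℕ∞) f}
  mul_mem' := fun {f g} (hf : ContDiff ℝ (⊤ : ℕ∞) f) (hg : ContDiff ℝ (⊤ : ℕ∞) g) => hf.mul hg
  one_mem' := show ContDiff ℝ (⊤ : ℕ∞) (fun _ : ℝ => (1:ℝ)) from contDiff_const
  add_mem' := fun {f g} (hf : ContDiff ℝ (⊤ : ℕ∞) f) (hg : ContDiff ℝ (⊤ : ℕ∞) g) => hf.add hg
  zero_mem' := show ContDiff ℝ (⊤ : ℕ∞) (fun _ : ℝ => (0:ℝ)) from contDiff_const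
  neg_mem' := fun {f} (hf : ContDiff ℝ (⊤ : ℕ∞) f) => hf.neg

/-- The ring `A = (C^∞(ℝ))^ℕ` of sequences of smooth functions, termwise operations. -/
abbrev SeqA : Type := ℕ → SmoothR

/-- The diagonal `U∞ ⊆ A` of constant sequences. -/
def diagU : Set SeqA := {a | ∃ ψ : SmoothR, ∀ ν, a ν = ψ}

/-- `v' = (1 + sin (ν ·))_ν`. -/
noncomputable def vSin : SeqA := fun ν =>
  ⟨fun x => 1 + Real.sin (ν * x),
   show ContDiff ℝ (⊤ : ℕ∞) _ from
     contDiff_const.add ((Real.contDiff_sin.comp (contDiff_const.mul contDiff_id) :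
       ContDiff ℝ (⊤ : ℕ∞) fun x : ℝ => Real.sin ((ν : ℝ) * x)))⟩

/-- `v'' = (1 + cos (ν ·))_ν`. -/
noncomputable def vCos : SeqA := fun ν =>
  ⟨fun x => 1 + Real.cos (ν * x),
   show ContDiff ℝ (⊤ : ℕ∞) _ from
     contDiff_const.add ((Real.contDiff_cos.comp (contDiff_const.mul contDiff_id) :
       ContDiff ℝ (⊤ : ℕ∞) fun x : ℝ => Real.cos ((ν : ℝ) * x)))⟩

open Real in
lemma near_point (t x : ℝ) (ν : ℕ) :
    ∃ y : ℝ, |y - x| ≤ 2 * π / (ν + 1) ∧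
      ∃ n : ℤ, ((ν : ℝ) + 1) * y = t + n * (2 * π) := by
  have hπ := Real.pi_pos
  have hν : (0:ℝ) < (ν : ℝ) + 1 := by positivity
  set n : ℤ := ⌊(((ν:ℝ)+1) * x - t) / (2 * π)⌋ with hn
  refine ⟨(t + n * (2 * π)) / ((ν:ℝ)+1), ?_, n, by field_simp⟩
  have h1 : (n:ℝ) ≤ (((ν:ℝ)+1) * x - t) / (2 * π) := Int.floor_le _
  have h2 : (((ν:ℝ)+1) * x - t) / (2 * π) < n + 1 := Int.lt_floor_add_one _
  have h1' : (n:ℝ) * (2*π) ≤ ((ν:ℝ)+1) * x - t := by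
    rw [← le_div_iff₀ (by positivity)]; exact h1
  have h2' : ((ν:ℝ)+1) * x - t < ((n:ℝ)+1) * (2*π) := by
    rw [← div_lt_iff₀ (by positivity)]; exact h2
  have hyx : (t + n*(2*π))/((ν:ℝ)+1) - x = (t + n*(2*π) - ((ν:ℝ)+1)*x)/((ν:ℝ)+1) := by
    field_simp
  rw [hyx, abs_div, abs_of_pos hν]
  gcongr
  rw [abs_le]
  constructor <;> nlinarith

open Real in
lemma eq_zero_of_vanish (ψ : ℝ → ℝ) (hψ : Continuous ψ)
    (h : ∀ x : ℝ, ∀ ν : ℕ, ∃ y, |y - x| ≤ 2 * π / (ν + 1) ∧ ψ y = 0) :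
    ∀ x, ψ x = 0 := by
  intro x
  choose y h1 h2 using h x
  have hlim : Filter.Tendsto (fun ν : ℕ => 2 * π / ((ν : ℝ) + 1)) Filter.atTop (nhds 0) := by
    have h0 : Filter.Tendsto (fun ν : ℕ => 2 * π / (ν : ℝ)) Filter.atTop (nhds 0) :=
      tendsto_const_div_atTop_nhds_zero_nat _
    have h0' := h0.comp (Filter.tendsto_add_atTop_nat 1)
    refine h0'.congr fun ν => ?_
    simp [Function.comp]
  have hy : Filter.Tendsto y Filter.atTop (nhds x) := by
    rw [tendsto_iff_dist_tendsto_zero]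
    exact squeeze_zero (fun ν => dist_nonneg)
      (fun ν => by simpa [Real.dist_eq] using h1 ν) hlim
  have h3 : Filter.Tendsto (fun ν => ψ (y ν)) Filter.atTop (nhds (ψ x)) :=
    (hψ.tendsto x).comp hy
  have h4 : (fun ν => ψ (y ν)) = fun _ => (0:ℝ) := funext h2
  rw [h4] at h3
  exact tendsto_nhds_unique h3 tendsto_const_nhds

lemma pos_two_add (θ : ℝ) : 0 < 2 + Real.sin θ + Real.cos θ := by
  nlinarith [Real.sin_sq_add_cos_sq θ, sq_nonneg (Real.sin θ + 1), sq_nonneg (Real.cos θ + 1)]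

/-- termwise inverse of `v' + v''`. -/
noncomputable def wInv : SeqA := fun ν =>
  ⟨fun x => (2 + Real.sin (ν * x) + Real.cos (ν * x))⁻¹, show ContDiff ℝ (⊤ : ℕ∞) _ by
    apply ContDiff.inv
    · exact (contDiff_const.add ((Real.contDiff_sin.comp (contDiff_const.mul contDiff_id))) |>.add
        ((Real.contDiff_cos.comp (contDiff_const.mul contDiff_id))))
    · exact fun x => (pos_two_add _).ne'⟩

/-- Trivial intersection with the diagonal is not preserved under sums of ideals:
in `A = (C^∞(ℝ))^ℕ` the principal ideals generated by `(1 + sin (ν·))_ν` and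
`(1 + cos (ν·))_ν` each meet the diagonal trivially, but their sum is all of `A`. -/
theorem sum_of_offdiagonal_ideals_not_offdiagonal :
    ((Ideal.span {vSin} : Ideal SeqA) : Set SeqA) ∩ diagU ⊆ {0} ∧
    ((Ideal.span {vCos} : Ideal SeqA) : Set SeqA) ∩ diagU ⊆ {0} ∧
    (Ideal.span {vSin} : Ideal SeqA) ⊔ Ideal.span {vCos} = ⊤ := by
  have hπ := Real.pi_pos
  refine ⟨?_, ?_, ?_⟩
  · rintro a ⟨hspan, ψ, hψ⟩
    rw [SetLike.mem_coe, Ideal.mem_span_singleton] at hspan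
    obtain ⟨c, hc⟩ := hspan
    have hψ0 : ∀ z, (ψ : ℝ → ℝ) z = 0 := by
      apply eq_zero_of_vanish _ ((show ContDiff ℝ (⊤ : ℕ∞) (ψ : ℝ → ℝ) from ψ.2).continuous)
      intro x ν
      obtain ⟨y, hy, n, hn⟩ := near_point (-(Real.pi/2)) x ν
      refine ⟨y, hy, ?_⟩
      have hval : (ψ : ℝ → ℝ) = fun z => (1 + Real.sin ((ν+1 : ℕ) * z)) * ((c (ν+1) : ℝ → ℝ) z) := by
        rw [← hψ (ν+1), hc]; rfl
      rw [hval]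
      have : Real.sin ((ν+1 : ℕ) * y) = -1 := by
        push_cast
        rw [hn, Real.sin_add_int_mul_two_pi, Real.sin_neg, Real.sin_pi_div_two]
      simp only [this]
      ring
    have : ψ = 0 := Subtype.ext (funext hψ0)
    show a = 0
    funext ν
    rw [hψ ν, this]; rfl
  · rintro a ⟨hspan, ψ, hψ⟩
    rw [SetLike.mem_coe, Ideal.mem_span_singleton] at hspan
    obtain ⟨c, hc⟩ := hspan
    have hψ0 : ∀ z, (ψ : ℝ → ℝ) z = 0 := by
      apply eq_zero_of_vanish _ ((show ContDiff ℝ (⊤ : ℕ∞) (ψ : ℝ → ℝ) from ψ.2).continuous)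
      intro x ν
      obtain ⟨y, hy, n, hn⟩ := near_point Real.pi x ν
      refine ⟨y, hy, ?_⟩
      have hval : (ψ : ℝ → ℝ) = fun z => (1 + Real.cos ((ν+1 : ℕ) * z)) * ((c (ν+1) : ℝ → ℝ) z) := by
        rw [← hψ (ν+1), hc]; rfl
      rw [hval]
      have : Real.cos ((ν+1 : ℕ) * y) = -1 := by
        push_cast
        rw [hn, Real.cos_add_int_mul_two_pi, Real.cos_pi]
      simp only [this]
      ring
    have : ψ = 0 := Subtype.ext (funext hψ0)
    show a = 0
    funext ν
    rw [hψ ν, this]; rfl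
  · have hmem : vSin + vCos ∈ (Ideal.span {vSin} : Ideal SeqA) ⊔ Ideal.span {vCos} :=
      Submodule.add_mem_sup (Ideal.mem_span_singleton_self _) (Ideal.mem_span_singleton_self _)
    refine Ideal.eq_top_of_isUnit_mem _ hmem ?_
    refine IsUnit.of_mul_eq_one wInv ?_
    funext ν
    apply Subtype.ext
    funext x
    show (1 + Real.sin (ν * x) + (1 + Real.cos (ν * x))) *
      (2 + Real.sin (ν * x) + Real.cos (ν * x))⁻¹ = 1
    rw [show (1 + Real.sin (↑ν * x) + (1 + Real.cos (↑ν * x)))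
        = 2 + Real.sin (↑ν * x) + Real.cos (↑ν * x) by ring]
    exact mul_inv_cancel₀ (pos_two_add _).ne'
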